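/- Reduction of causal-team consequence to generalized-causal-team consequence: For any set Γ ∪ {ψ} of CO⩗[σ]-formulas: Γ ⊨^c ψ if and only if Γ ∪ { ⩗_{F∈𝔽σ} Φ^F } ⊨^g ψ, where 𝔽σ is the finite set of all systems of functions over σ and the displayed disjunction is intuitionistic. -/

import Mathlib

open scoped Classical
set_option linter.unusedSectionVars false

noncomputable section

/-- Assignments of values to variables. -/
abbrev Asg (V : Type) (Val : V → Type) : Type := (v : V) → Val v

/-- A recursive system of functions over the signature `(V, Val)`:
each endogenous variable `v ∈ En` has a parent set `pa v` and a function `fn v`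
computing its value from the values of its parents; recursiveness says that the
induced causal graph is acyclic. -/
structure Sys (V : Type) (Val : V → Type) : Type where
  En : Finset V
  pa : V → Finset V
  fn : (v : V) → ((w : V) → w ∈ pa v → Val w) → Val v
  recursive : ∀ x : V, ¬ Relation.TransGen (fun a b => b ∈ En ∧ a ∈ pa b) x x

variable {V : Type} [Fintype V] [DecidableEq V] [Nonempty V]
  {Val : V → Type} [∀ v, Fintype (Val v)] [∀ v, DecidableEq (Val v)] [∀ v, Nonempty (Val v)]

namespace CausalTeam

/-- The edge relation of the causal graph of a system of functions. -/
@[reducible] def Edge (F : Sys V Val) (a b : V) : Prop := b ∈ F.En ∧ a ∈ F.pa b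

theorem wfEdge (F : Sys V Val) : WellFounded (Edge F) := by
  have h2 : WellFounded (Relation.TransGen (Edge F)) := by
    have hirr : IsIrrefl V (Relation.TransGen (Edge F)) := ⟨F.recursive⟩
    have htr : IsTrans V (Relation.TransGen (Edge F)) :=
      ⟨fun _ _ _ h h' => Relation.TransGen.trans h h'⟩
    exact Finite.wellFounded_of_trans_of_irrefl _
  exact Subrelation.wf (fun h => Relation.TransGen.single h) h2

/-- An assignment is compatible with a system of functions if every endogenous
variable takes the value prescribed by its function. -/
def Compat (F : Sys V Val) (s : Asg V Val) : Prop :=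
  ∀ v ∈ F.En, s v = F.fn v (fun w _ => s w)

/-- The variables occurring in a conjunction of equations `𝐗 = 𝐱`. -/
def ikeys (I : List ((v : V) × Val v)) : List V := I.map Sigma.fst

/-- A conjunction of equations is consistent if it contains no pair `X = x`, `X = x'`
with distinct values `x ≠ x'`. -/
def IConsistent (I : List ((v : V) × Val v)) : Prop :=
  ∀ p ∈ I, ∀ q ∈ I, p.1 = q.1 → p = q

/-- Look up the (first) value assigned to a variable by a conjunction of equations. -/
def ilookup : List ((v : V) × Val v) → (v : V) → Option (Val v)
  | [], _ => none
  | p :: I, v => if h : p.1 = v then some (h ▸ p.2) else ilookup I v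

/-- The intervened system of functions `F_{𝐗=𝐱}`: the restriction of `F` to `En(F) ∖ 𝐗`. -/
def doSys (F : Sys V Val) (I : List ((v : V) × Val v)) : Sys V Val where
  En := F.En.filter (fun v => v ∉ ikeys I)
  pa := F.pa
  fn := F.fn
  recursive := by
    intro x hx
    refine F.recursive x (Relation.TransGen.mono ?_ x x hx)
    intro a b hab
    exact ⟨(Finset.mem_filter.mp hab.1).1, hab.2⟩

/-- The intervened assignment `s_{𝐗=𝐱}`: variables in `𝐗` get the prescribed values,
exogenous variables outside `𝐗` keep their values, and endogenous variables outside `𝐗`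
are recomputed (recursively) by their functions. -/
def doAsg (F : Sys V Val) (I : List ((v : V) × Val v)) (s : Asg V Val) : Asg V Val :=
  (wfEdge F).fix (C := fun v => Val v) fun v ih =>
    match ilookup I v with
    | some x => x
    | none => if h : v ∈ F.En then F.fn v (fun w hw => ih w ⟨h, hw⟩) else s v

/-- Formulas of the languages CO[σ], CO⩗[σ] and COD[σ]:
equations `X = x`, dependence atoms `=(𝐗;Y)`, negation, conjunction,
tensor disjunction `∨`, intuitionistic disjunction `⩗`, and counterfactuals `𝐗=𝐱 □→ φ`. -/
inductive Fml (V : Type) (Val : V → Type) : Type where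
  | eq : (v : V) → Val v → Fml V Val
  | dep : List V → V → Fml V Val
  | neg : Fml V Val → Fml V Val
  | and : Fml V Val → Fml V Val → Fml V Val
  | or : Fml V Val → Fml V Val → Fml V Val
  | ior : Fml V Val → Fml V Val → Fml V Val
  | cf : List ((v : V) × Val v) → Fml V Val → Fml V Val

/-- CO[σ]-formulas: equations, closed under ¬, ∧, ∨ and counterfactuals. -/
inductive IsCO : Fml V Val → Prop where
  | eq (v : V) (x : Val v) : IsCO (Fml.eq v x)
  | neg {φ} : IsCO φ → IsCO (Fml.neg φ)
  | and {φ ψ} : IsCO φ → IsCO ψ → IsCO (Fml.and φ ψ)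
  | or {φ ψ} : IsCO φ → IsCO ψ → IsCO (Fml.or φ ψ)
  | cf {φ} (I : List ((v : V) × Val v)) : IsCO φ → IsCO (Fml.cf I φ)

/-- CO⩗[σ]-formulas: additionally closed under ⩗; negation applies to CO-formulas only. -/
inductive IsCOV : Fml V Val → Prop where
  | eq (v : V) (x : Val v) : IsCOV (Fml.eq v x)
  | neg {φ} : IsCO φ → IsCOV (Fml.neg φ)
  | and {φ ψ} : IsCOV φ → IsCOV ψ → IsCOV (Fml.and φ ψ)
  | or {φ ψ} : IsCOV φ → IsCOV ψ → IsCOV (Fml.or φ ψ)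
  | ior {φ ψ} : IsCOV φ → IsCOV ψ → IsCOV (Fml.ior φ ψ)
  | cf {φ} (I : List ((v : V) × Val v)) : IsCOV φ → IsCOV (Fml.cf I φ)

/-- COD[σ]-formulas: additionally allow dependence atoms; negation applies to
CO-formulas only. -/
inductive IsCOD : Fml V Val → Prop where
  | eq (v : V) (x : Val v) : IsCOD (Fml.eq v x)
  | dep (X : List V) (Y : V) : IsCOD (Fml.dep X Y)
  | neg {φ} : IsCO φ → IsCOD (Fml.neg φ)
  | and {φ ψ} : IsCOD φ → IsCOD ψ → IsCOD (Fml.and φ ψ)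
  | or {φ ψ} : IsCOD φ → IsCOD ψ → IsCOD (Fml.or φ ψ)
  | cf {φ} (I : List ((v : V) × Val v)) : IsCOD φ → IsCOD (Fml.cf I φ)

/-- Satisfaction over causal teams `(Tm, F)` (the causal team semantics `⊨^c`). -/
def satC : Set (Asg V Val) → Sys V Val → Fml V Val → Prop
  | Tm, _, Fml.eq v x => ∀ s ∈ Tm, s v = x
  | Tm, _, Fml.dep X Y => ∀ s ∈ Tm, ∀ t ∈ Tm, (∀ w ∈ X, s w = t w) → s Y = t Y
  | Tm, F, Fml.neg φ => ∀ s ∈ Tm, ¬ satC {s} F φ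
  | Tm, F, Fml.and φ ψ => satC Tm F φ ∧ satC Tm F ψ
  | Tm, F, Fml.or φ ψ => ∃ T1 T2 : Set (Asg V Val), T1 ∪ T2 = Tm ∧ satC T1 F φ ∧ satC T2 F ψ
  | Tm, F, Fml.ior φ ψ => satC Tm F φ ∨ satC Tm F ψ
  | Tm, F, Fml.cf I φ => IConsistent I → satC (doAsg F I '' Tm) (doSys F I) φ

/-- Satisfaction over generalized causal teams (the semantics `⊨^g`). -/
def satG : Set (Asg V Val × Sys V Val) → Fml V Val → Prop
  | T, Fml.eq v x => ∀ p ∈ T, p.1 v = x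
  | T, Fml.dep X Y => ∀ p ∈ T, ∀ q ∈ T, (∀ w ∈ X, p.1 w = q.1 w) → p.1 Y = q.1 Y
  | T, Fml.neg φ => ∀ p ∈ T, ¬ satG {p} φ
  | T, Fml.and φ ψ => satG T φ ∧ satG T ψ
  | T, Fml.or φ ψ => ∃ T1 T2 : Set (Asg V Val × Sys V Val), T1 ∪ T2 = T ∧ satG T1 φ ∧ satG T2 ψ
  | T, Fml.ior φ ψ => satG T φ ∨ satG T ψ
  | T, Fml.cf I φ => IConsistent I →
      satG ((fun p : Asg V Val × Sys V Val => (doAsg p.2 I p.1, doSys p.2 I)) '' T) φ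

/-- A generalized causal team: a set of pairs `(s, F)` with `s` compatible with `F`. -/
def GTOk (T : Set (Asg V Val × Sys V Val)) : Prop := ∀ p ∈ T, Compat p.2 p.1

/-- The falsum `⊥`, an abbreviation for `X=x ∧ ¬(X=x)`. -/
def fBot : Fml V Val :=
  Fml.and (Fml.eq (Classical.arbitrary V) (Classical.arbitrary (Val (Classical.arbitrary V))))
    (Fml.neg (Fml.eq (Classical.arbitrary V) (Classical.arbitrary (Val (Classical.arbitrary V)))))

/-- A canonical tautology. -/
def fTop : Fml V Val := Fml.neg fBot

/-- Finite conjunction of a list of formulas. -/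
def bigAnd : List (Fml V Val) → Fml V Val
  | [] => fTop
  | [φ] => φ
  | φ :: ψ :: rest => Fml.and φ (bigAnd (ψ :: rest))

/-- Finite tensor disjunction of a list of formulas. -/
def bigOr : List (Fml V Val) → Fml V Val
  | [] => fBot
  | [φ] => φ
  | φ :: ψ :: rest => Fml.or φ (bigOr (ψ :: rest))

/-- Finite intuitionistic disjunction of a list of formulas. -/
def bigIor : List (Fml V Val) → Fml V Val
  | [] => fBot
  | [φ] => φ
  | φ :: ψ :: rest => Fml.ior φ (bigIor (ψ :: rest))

/-- The conjunction of equations describing the restriction of the assignment `t`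
to the set `S` of variables. -/
def eqList (S : Finset V) (t : Asg V Val) : List ((v : V) × Val v) :=
  S.toList.map (fun w => ⟨w, t w⟩)

/-- The list of all assignments over the signature. -/
def allAsg : List (Asg V Val) := (Finset.univ : Finset (Asg V Val)).toList

/-- `η(v)`: for every tuple of values for the variables other than `v`, intervening
with those values forces `v` to take the value computed by `F.fn v` from the parents. -/
def eta (F : Sys V Val) (v : V) : Fml V Val :=
  bigAnd (allAsg.map (fun t =>
    Fml.cf (eqList (Finset.univ.erase v) t) (Fml.eq v (F.fn v (fun w _ => t w)))))

/-- `ξ(v)`: the value of `v` is unaffected by interventions on all other variables. -/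
def xi (v : V) : Fml V Val :=
  bigAnd ((Finset.univ : Finset (Val v)).toList.map (fun x =>
    bigAnd (allAsg.map (fun t =>
      Fml.or (Fml.neg (Fml.eq v x))
        (Fml.cf (eqList (Finset.univ.erase v) t) (Fml.eq v x))))))

/-- `Cn(F)`: the endogenous variables of `F` governed by a constant function. -/
def Cn (F : Sys V Val) : Finset V :=
  F.En.filter (fun v => ∃ c : Val v, ∀ p, F.fn v p = c)

/-- The non-constant endogenous variables `En(F) ∖ Cn(F)`. -/
def strictEn (F : Sys V Val) : Finset V := F.En \ Cn F

/-- `F_v ∼ G_v`: equivalence of the two functions for `v` up to dummy arguments. -/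
def SimFn (F G : Sys V Val) (v : V) : Prop :=
  ∀ (x : (w : V) → w ∈ F.pa v ∩ G.pa v → Val w)
    (y : (w : V) → w ∈ F.pa v \ G.pa v → Val w)
    (z : (w : V) → w ∈ G.pa v \ F.pa v → Val w),
    F.fn v (fun w hw =>
      if h : w ∈ G.pa v then x w (Finset.mem_inter.mpr ⟨hw, h⟩)
      else y w (Finset.mem_sdiff.mpr ⟨hw, h⟩)) =
    G.fn v (fun w hw =>
      if h : w ∈ F.pa v then x w (Finset.mem_inter.mpr ⟨h, hw⟩)
      else z w (Finset.mem_sdiff.mpr ⟨hw, h⟩))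

/-- `F ∼ G`: equivalence of systems of functions up to dummy arguments. -/
def Sim (F G : Sys V Val) : Prop :=
  strictEn F = strictEn G ∧ ∀ v ∈ strictEn F, SimFn F G v

/-- The CO[σ]-formula `Φ^F` characterizing the function component `F` up to `∼`. -/
def Phi (F : Sys V Val) : Fml V Val :=
  Fml.and (bigAnd (F.En.toList.map (fun v => eta F v)))
    (bigAnd ((((Finset.univ : Finset V) \ F.En) ∪ Cn F).toList.map (fun v => xi v)))

/-- The CO[σ]-formula `Θ^A`: the team component is included in `A`. -/
def Theta (A : Finset (Asg V Val)) : Fml V Val :=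
  bigOr (A.toList.map (fun s =>
    bigAnd ((Finset.univ : Finset V).toList.map (fun v => Fml.eq v (s v)))))

/-- `χ₁`: all variables are constant in the team. -/
def chi1 : Fml V Val :=
  bigAnd ((Finset.univ : Finset V).toList.map (fun v => Fml.dep [] v))

/-- `χ_k`: the team has at most `k` elements. -/
def chi : ℕ → Fml V Val
  | 0 => fBot
  | 1 => chi1
  | (k+2) => Fml.or chi1 (chi (k+1))

/-!
Satisfying `Φ^F` says exactly that in every pair `(s, G)` of the team each variable responds to
every full context as it would under `F` (`η` for the endogenous variables of `F`, `ξ` for the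
others, which keep their value from `s`). Interventions only consult these responses, so such a
pair evolves under every intervention like `(s, F)`, and the team satisfies the same formulas as
the causal team `(Prod.fst '' T, F)`. Conversely, a causal team `(Tm, F)` is the generalized team
`(·, F) '' Tm`, which satisfies `Φ^F`.
-/

theorem Edge.ne {F : Sys V Val} {w v : V} (h : Edge F w v) : w ≠ v := by
  rintro rfl
  exact F.recursive w (.single h)

def response (F : Sys V Val) (s : Asg V Val) (v : V) (t : Asg V Val) : Val v :=
  if v ∈ F.En then F.fn v (fun w _ => t w) else s v

def SameResponses (F G : Sys V Val) (s : Asg V Val) : Prop :=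
  ∀ v t, response F s v t = response G s v t

theorem response_congr {F : Sys V Val} {s t t' : Asg V Val} {v : V}
    (h : ∀ w, Edge F w v → t w = t' w) : response F s v t = response F s v t' := by
  unfold response
  split_ifs with hv
  · exact congrArg (F.fn v) (funext₂ fun w hw => h w ⟨hv, hw⟩)
  · rfl

theorem response_self_of_compat {F : Sys V Val} {s : Asg V Val} (hs : Compat F s) (v : V) :
    response F s v s = s v := by
  unfold response
  split_ifs with hv
  · exact (hs v hv).symm
  · rfl

theorem Compat.of_sameResponses {F G : Sys V Val} {s : Asg V Val} (hG : Compat G s)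
    (hFG : SameResponses F G s) : Compat F s := by
  intro v hv
  have := response_self_of_compat hG v
  rw [← hFG, response, if_pos hv] at this
  exact this.symm

theorem ilookup_eq_none_iff (I : List ((v : V) × Val v)) (v : V) :
    ilookup I v = none ↔ v ∉ ikeys I := by
  induction I with
  | nil => simp [ilookup, ikeys]
  | cons p I ih =>
    by_cases h : p.1 = v
    · simp [ilookup, ikeys, h]
    · simpa [ilookup, ikeys, h, Ne.symm h] using ih

theorem ilookup_eqList (S : Finset V) (t : Asg V Val) (v : V) :
    ilookup (eqList S t) v = if v ∈ S then some (t v) else none := by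
  suffices ∀ l : List V, ilookup (l.map fun w => (⟨w, t w⟩ : (v : V) × Val v)) v
      = if v ∈ l then some (t v) else none by rw [eqList]; simpa using this S.toList
  intro l
  induction l with
  | nil => rfl
  | cons w l ih =>
    by_cases h : w = v
    · subst h; simp [ilookup]
    · simp [ilookup, h, ih, Ne.symm h]

theorem iconsistent_eqList (S : Finset V) (t : Asg V Val) : IConsistent (eqList S t) := by
  intro p hp q hq h
  obtain ⟨w, -, rfl⟩ := List.mem_map.mp hp
  obtain ⟨w', -, rfl⟩ := List.mem_map.mp hq
  cases h
  rfl

theorem doAsg_apply (F : Sys V Val) (I : List ((v : V) × Val v)) (s : Asg V Val) (v : V) :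
    doAsg F I s v =
      match ilookup I v with
      | some x => x
      | none => if _ : v ∈ F.En then F.fn v (fun w _ => doAsg F I s w) else s v := by
  unfold doAsg
  rw [WellFounded.fix_eq]

theorem doAsg_of_ilookup_some {F : Sys V Val} {I : List ((v : V) × Val v)} {s : Asg V Val}
    {v : V} {x : Val v} (h : ilookup I v = some x) : doAsg F I s v = x := by
  rw [doAsg_apply, h]

theorem doAsg_of_ilookup_none {F : Sys V Val} {I : List ((v : V) × Val v)} {s : Asg V Val}
    {v : V} (h : ilookup I v = none) : doAsg F I s v = response F s v (doAsg F I s) := by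
  rw [doAsg_apply, h, response, dite_eq_ite]

theorem doAsg_eq_of_sameResponses {F G : Sys V Val} {s : Asg V Val} (hFG : SameResponses F G s)
    (I : List ((v : V) × Val v)) : doAsg F I s = doAsg G I s := by
  funext v
  induction v using (wfEdge F).induction with
  | _ v ih =>
  cases hv : ilookup I v with
  | some x => rw [doAsg_of_ilookup_some hv, doAsg_of_ilookup_some hv]
  | none => rw [doAsg_of_ilookup_none hv, doAsg_of_ilookup_none hv, ← hFG, response_congr ih]

theorem doAsg_eqList_erase_self (F : Sys V Val) (s t : Asg V Val) (v : V) :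
    doAsg F (eqList (Finset.univ.erase v) t) s v = response F s v t := by
  rw [doAsg_of_ilookup_none (by simp [ilookup_eqList])]
  refine response_congr fun w hwv => doAsg_of_ilookup_some ?_
  simp [ilookup_eqList, hwv.ne]

theorem sameResponses_doSys {F G : Sys V Val} {s : Asg V Val} (hFG : SameResponses F G s)
    (I : List ((v : V) × Val v)) :
    SameResponses (doSys F I) (doSys G I) (doAsg G I s) := by
  intro v t
  by_cases hv : v ∈ ikeys I
  · simp [response, doSys, hv]
  -- off `ikeys I`, `doAsg G I s` agrees with `s` on the variables exogenous for `F` or for `G`,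
  -- which is all that `response` reads from it
  · have hs := doAsg_of_ilookup_none (F := G) (s := s) ((ilookup_eq_none_iff I v).mpr hv)
    have hs' := hs.trans (hFG v _).symm
    have ht := hFG v t
    simp only [response, doSys, Finset.mem_filter, hv, not_false_eq_true, and_true] at ht hs hs' ⊢
    split_ifs at ht hs hs' ⊢ <;> simp_all

theorem satC_mono {φ : Fml V Val} {T T' : Set (Asg V Val)} {F : Sys V Val} (hsub : T' ⊆ T)
    (h : satC T F φ) : satC T' F φ := by
  induction φ generalizing T T' F with
  | eq v x => exact fun s hs => h s (hsub hs)
  | dep X Y => exact fun s hs t ht => h s (hsub hs) t (hsub ht)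
  | neg φ _ => exact fun s hs => h s (hsub hs)
  | and φ ψ ihφ ihψ => exact ⟨ihφ hsub h.1, ihψ hsub h.2⟩
  | or φ ψ ihφ ihψ =>
    obtain ⟨T₁, T₂, rfl, h₁, h₂⟩ := h
    refine ⟨T₁ ∩ T', T₂ ∩ T', ?_, ihφ Set.inter_subset_left h₁, ihψ Set.inter_subset_left h₂⟩
    rw [← Set.union_inter_distrib_right, Set.inter_eq_right.mpr hsub]
  | ior φ ψ ihφ ihψ => exact h.imp (ihφ hsub) (ihψ hsub)
  | cf I φ ih => exact fun hI => ih (Set.image_mono hsub) (h hI)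

theorem satC_fTop (Tm : Set (Asg V Val)) (F : Sys V Val) : satC Tm F fTop :=
  fun s _ hbot => hbot.2 s rfl hbot.1

theorem satG_fTop (T : Set (Asg V Val × Sys V Val)) : satG T fTop :=
  fun p _ hbot => hbot.2 p rfl hbot.1

theorem satC_bigAnd {l : List (Fml V Val)} {Tm : Set (Asg V Val)} {F : Sys V Val} :
    satC Tm F (bigAnd l) ↔ ∀ φ ∈ l, satC Tm F φ := by
  induction l with
  | nil => simpa [bigAnd] using satC_fTop Tm F
  | cons φ l ih =>
    cases l with
    | nil => simp [bigAnd]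
    | cons χ l => exact and_congr_right' ih |>.trans List.forall_mem_cons.symm

theorem satG_bigAnd {l : List (Fml V Val)} {T : Set (Asg V Val × Sys V Val)} :
    satG T (bigAnd l) ↔ ∀ φ ∈ l, satG T φ := by
  induction l with
  | nil => simpa [bigAnd] using satG_fTop T
  | cons φ l ih =>
    cases l with
    | nil => simp [bigAnd]
    | cons χ l => exact and_congr_right' ih |>.trans List.forall_mem_cons.symm

theorem satG_bigIor {l : List (Fml V Val)} {T : Set (Asg V Val × Sys V Val)} (hl : l ≠ []) :
    satG T (bigIor l) ↔ ∃ φ ∈ l, satG T φ := by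
  induction l with
  | nil => exact absurd rfl hl
  | cons φ l ih =>
    cases l with
    | nil => simp [bigIor]
    | cons χ l => exact or_congr_right (ih (List.cons_ne_nil _ _)) |>.trans (by simp)

theorem fst_image_intervene {T : Set (Asg V Val × Sys V Val)} {F : Sys V Val}
    (hT : ∀ p ∈ T, SameResponses F p.2 p.1) (I : List ((v : V) × Val v)) :
    Prod.fst '' ((fun p : Asg V Val × Sys V Val => (doAsg p.2 I p.1, doSys p.2 I)) '' T) =
      doAsg F I '' (Prod.fst '' T) := by
  rw [Set.image_image, Set.image_image]
  exact Set.image_congr fun p hp => (doAsg_eq_of_sameResponses (hT p hp) I).symm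

theorem satG_iff_satC_fst_image {φ : Fml V Val} {T : Set (Asg V Val × Sys V Val)}
    {F : Sys V Val} (hT : ∀ p ∈ T, SameResponses F p.2 p.1) :
    satG T φ ↔ satC (Prod.fst '' T) F φ := by
  induction φ generalizing T F with
  | eq v x | dep X Y => simp only [satG, satC, Set.forall_mem_image]
  | neg φ ih =>
    have hsingle : ∀ p ∈ T, (satG {p} φ ↔ satC {p.1} F φ) := fun p hp => by
      rw [ih (by simpa using hT p hp), Set.image_singleton]
    simp only [satG, satC, Set.forall_mem_image]
    exact forall₂_congr fun p hp => not_congr (hsingle p hp)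
  | and φ ψ ihφ ihψ => exact and_congr (ihφ hT) (ihψ hT)
  | or φ ψ ihφ ihψ =>
    constructor
    · rintro ⟨T₁, T₂, rfl, h₁, h₂⟩
      exact ⟨_, _, (Set.image_union ..).symm, (ihφ fun p hp => hT p (.inl hp)).mp h₁,
        (ihψ fun p hp => hT p (.inr hp)).mp h₂⟩
    · rintro ⟨S₁, S₂, hS, h₁, h₂⟩
      refine ⟨T ∩ Prod.fst ⁻¹' S₁, T ∩ Prod.fst ⁻¹' S₂, ?_, ?_, ?_⟩
      · rw [← Set.inter_union_distrib_left, ← Set.preimage_union, hS]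
        exact Set.inter_eq_left.mpr (Set.subset_preimage_image _ _)
      · rw [ihφ fun p hp => hT p hp.1, Set.image_inter_preimage]
        exact satC_mono Set.inter_subset_right h₁
      · rw [ihψ fun p hp => hT p hp.1, Set.image_inter_preimage]
        exact satC_mono Set.inter_subset_right h₂
  | ior φ ψ ihφ ihψ => exact or_congr (ihφ hT) (ihψ hT)
  | cf I φ ih =>
    have hT' : ∀ q ∈ (fun p : Asg V Val × Sys V Val => (doAsg p.2 I p.1, doSys p.2 I)) '' T,
        SameResponses (doSys F I) q.2 q.1 := by
      rintro _ ⟨p, hp, rfl⟩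
      exact sameResponses_doSys (hT p hp) I
    exact imp_congr_right fun _ => (ih hT').trans (by rw [fst_image_intervene hT])

theorem satG_image_pair_iff {φ : Fml V Val} {Tm : Set (Asg V Val)} {F : Sys V Val} :
    satG ((fun s => (s, F)) '' Tm) φ ↔ satC Tm F φ := by
  rw [satG_iff_satC_fst_image (by rintro _ ⟨s, -, rfl⟩ v t; rfl), Set.image_image]
  simp

theorem satC_eta {Tm : Set (Asg V Val)} {F : Sys V Val} {v : V} (hv : v ∈ F.En) :
    satC Tm F (eta F v) := by
  simp only [eta, satC_bigAnd, List.forall_mem_map]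
  rintro t - - _ ⟨s, -, rfl⟩
  rw [doAsg_eqList_erase_self, response, if_pos hv]

theorem satC_xi {Tm : Set (Asg V Val)} {F : Sys V Val} {v : V} (hTm : ∀ s ∈ Tm, Compat F s)
    (hv : v ∉ F.En ∨ v ∈ Cn F) : satC Tm F (xi v) := by
  have hresp : ∀ s ∈ Tm, ∀ t, response F s v t = s v := by
    intro s hs t
    rcases hv with hv | hv
    · rw [response, if_neg hv]
    · obtain ⟨hvF, c, hc⟩ := Finset.mem_filter.mp hv
      rw [response, if_pos hvF, hTm s hs v hvF, hc, hc]
  simp only [xi, satC_bigAnd, List.forall_mem_map]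
  rintro x - t -
  refine ⟨{s ∈ Tm | s v ≠ x}, {s ∈ Tm | s v = x}, ?_, fun s hs hsat => hs.2 (hsat s rfl), ?_⟩
  · ext s
    by_cases s v = x <;> simp [*]
  · rintro _ - ⟨s, hs, rfl⟩
    rw [doAsg_eqList_erase_self, hresp s hs.1, hs.2]

theorem satC_Phi {Tm : Set (Asg V Val)} {F : Sys V Val} (hTm : ∀ s ∈ Tm, Compat F s) :
    satC Tm F (Phi F) := by
  refine ⟨satC_bigAnd.mpr ?_, satC_bigAnd.mpr ?_⟩ <;> simp only [List.forall_mem_map]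
  · exact fun v hv => satC_eta (Finset.mem_toList.mp hv)
  · intro v hv
    refine satC_xi hTm ?_
    simpa [or_comm] using hv

theorem response_eq_of_satG_eta {T : Set (Asg V Val × Sys V Val)} {F : Sys V Val} {v : V}
    (h : satG T (eta F v)) {p : Asg V Val × Sys V Val} (hp : p ∈ T) (t : Asg V Val) :
    response p.2 p.1 v t = F.fn v (fun w _ => t w) := by
  simp only [eta, satG_bigAnd, List.forall_mem_map] at h
  rw [← doAsg_eqList_erase_self]
  exact h t (by simp [allAsg]) (iconsistent_eqList _ _) _ (Set.mem_image_of_mem _ hp)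

theorem response_eq_of_satG_xi {T : Set (Asg V Val × Sys V Val)} {v : V} (h : satG T (xi v))
    {p : Asg V Val × Sys V Val} (hp : p ∈ T) (t : Asg V Val) :
    response p.2 p.1 v t = p.1 v := by
  simp only [xi, satG_bigAnd, List.forall_mem_map] at h
  obtain ⟨T₁, T₂, hT, h₁, h₂⟩ := h (p.1 v) (by simp) t (by simp [allAsg])
  have hp₂ : p ∈ T₂ := by
    rcases hT ▸ hp with hp₁ | hp₂
    · exact absurd (fun q hq => by rw [hq]) (h₁ p hp₁)
    · exact hp₂
  rw [← doAsg_eqList_erase_self]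
  exact h₂ (iconsistent_eqList _ _) _ (Set.mem_image_of_mem _ hp₂)

theorem sameResponses_of_satG_Phi {T : Set (Asg V Val × Sys V Val)} {F : Sys V Val}
    (h : satG T (Phi F)) : ∀ p ∈ T, SameResponses F p.2 p.1 := by
  obtain ⟨hη, hξ⟩ := h
  simp only [satG_bigAnd, List.forall_mem_map] at hη hξ
  intro p hp v t
  by_cases hv : v ∈ F.En
  · rw [response, if_pos hv, response_eq_of_satG_eta (hη v (by simpa using hv)) hp]
  · rw [response, if_neg hv, response_eq_of_satG_xi (hξ v (by simp [hv])) hp]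

def emptySys : Sys V Val where
  En := ∅
  pa _ := ∅
  fn _ _ := Classical.arbitrary _
  recursive x hx := by cases hx <;> simp_all

end CausalTeam

open CausalTeam

theorem causal_consequence_iff_generalized_with_uniformity_general
    {V : Type} [Fintype V] [DecidableEq V] [Nonempty V]
    {Val : V → Type} [∀ v, Fintype (Val v)] [∀ v, DecidableEq (Val v)] [∀ v, Nonempty (Val v)]
    (Γ : Set (Fml V Val)) (ψ : Fml V Val)
    (L : List (Sys V Val)) (hL : ∀ F : Sys V Val, F ∈ L) :
    (∀ (Tm : Set (Asg V Val)) (F : Sys V Val), (∀ s ∈ Tm, Compat F s) →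
        (∀ γ ∈ Γ, satC Tm F γ) → satC Tm F ψ) ↔
    (∀ T : Set (Asg V Val × Sys V Val), GTOk T →
        (∀ γ ∈ Γ, satG T γ) → satG T (bigIor (L.map Phi)) → satG T ψ) := by
  have hΦ : L.map Phi ≠ [] := by simpa using List.ne_nil_of_mem (hL emptySys)
  constructor
  · intro hC T hT hΓT hΦT
    obtain ⟨_, hF, hΦF⟩ := (satG_bigIor hΦ).mp hΦT
    obtain ⟨F, -, rfl⟩ := List.mem_map.mp hF
    have hTF := sameResponses_of_satG_Phi hΦF
    have hcompat : ∀ s ∈ Prod.fst '' T, Compat F s := by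
      rintro _ ⟨p, hp, rfl⟩
      exact (hT p hp).of_sameResponses (hTF p hp)
    refine (satG_iff_satC_fst_image hTF).mpr (hC _ F hcompat fun γ hγ => ?_)
    exact (satG_iff_satC_fst_image hTF).mp (hΓT γ hγ)
  · intro hG Tm F hTm hΓTm
    rw [← satG_image_pair_iff]
    refine hG _ ?_ (fun γ hγ => satG_image_pair_iff.mpr (hΓTm γ hγ)) ?_
    · rintro _ ⟨s, hs, rfl⟩
      exact hTm s hs
    · exact (satG_bigIor hΦ).mpr
        ⟨Phi F, List.mem_map_of_mem (hL F), satG_image_pair_iff.mpr (satC_Phi hTm)⟩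

/-- **Reduction of causal-team consequence to generalized-causal-team consequence**:
for a set `Γ ∪ {ψ}` of CO⩗[σ]-formulas, `Γ ⊨^c ψ` iff `Γ, ⩗_{F ∈ 𝔽σ} Φ^F ⊨^g ψ`,
where the list `L` enumerates all systems of functions over the signature. -/
theorem causal_consequence_iff_generalized_with_uniformity
    {V : Type} [Fintype V] [DecidableEq V] [Nonempty V]
    {Val : V → Type} [∀ v, Fintype (Val v)] [∀ v, DecidableEq (Val v)] [∀ v, Nonempty (Val v)]
    (Γ : Set (Fml V Val)) (ψ : Fml V Val) (hΓ : ∀ γ ∈ Γ, IsCOV γ) (hψ : IsCOV ψ)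
    (L : List (Sys V Val)) (hL : ∀ F : Sys V Val, F ∈ L) :
    (∀ (Tm : Set (Asg V Val)) (F : Sys V Val), (∀ s ∈ Tm, Compat F s) →
        (∀ γ ∈ Γ, satC Tm F γ) → satC Tm F ψ) ↔
    (∀ T : Set (Asg V Val × Sys V Val), GTOk T →
        (∀ γ ∈ Γ, satG T γ) → satG T (bigIor (L.map Phi)) → satG T ψ) :=
  causal_consequence_iff_generalized_with_uniformity_general Γ ψ L hL
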